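/- Elliptical potential lemma without clipping: let x_1, …, x_T ∈ ℝ^d with ‖x_i‖ ≤ L for all i, let Λ_0 ∈ ℝ^{d×d} be symmetric positive definite with smallest eigenvalue λ_min(Λ_0) ≥ max(1, L²), and set Λ_t = Λ_0 + Σ_{i=1}^{t} x_i x_i^⊤. Then Σ_{i=1}^{T} ‖x_i‖²_{Λ_{i-1}^{-1}} ≤ 2·log( det(Λ_T)/det(Λ_0) ). -/

import Mathlib

open Finset Matrix

/-!
By the matrix determinant lemma, adding `x xᵀ` to a positive definite `Λ` multiplies `det Λ` by
`1 + ‖x‖²_{Λ⁻¹}`, so `∑ log (1 + ‖x_i‖²_{Λ_{i-1}⁻¹}) = log (det Λ_T / det Λ_0)` telescopes.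
Since `Λ_{i-1} ≥ Λ_0 ≥ max 1 L² • 1` in the Loewner order, each term
`‖x_i‖²_{Λ_{i-1}⁻¹} ≤ ‖x_i‖² / max 1 L²` lies in `[0, 1]`, where `u ≤ 2 log (1 + u)`.
-/

lemma Real.le_two_mul_log_one_add {u : ℝ} (hu₀ : 0 ≤ u) (hu₁ : u ≤ 1) :
    u ≤ 2 * Real.log (1 + u) := by
  have hpos : 0 < 1 + u := by linarith
  have key : 1 - (1 + u)⁻¹ ≤ Real.log (1 + u) := Real.one_sub_inv_le_log_of_pos hpos
  have hinv : (1 + u)⁻¹ ≤ 1 - u / 2 := by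
    rw [inv_le_iff_one_le_mul₀ hpos]
    nlinarith
  linarith

namespace Matrix

variable {n : Type*} [Fintype n] [DecidableEq n]

theorem det_add_vecMulVec {R : Type*} [CommRing R] {A : Matrix n n R} (hA : IsUnit A.det)
    (u v : n → R) : (A + vecMulVec u v).det = A.det * (1 + v ⬝ᵥ A⁻¹ *ᵥ u) := by
  rw [vecMulVec_eq (ι := Unit), det_add_replicateCol_mul_replicateRow hA, Matrix.mul_assoc,
    ← replicateCol_mulVec, det_unique (n := Unit)]
  simp [replicateRow_mul_replicateCol_apply]

lemma PosDef.dotProduct_inv_mulVec_nonneg {A : Matrix n n ℝ} (hA : A.PosDef) (v : n → ℝ) :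
    0 ≤ v ⬝ᵥ A⁻¹ *ᵥ v := by
  simpa using hA.inv.posSemidef.dotProduct_mulVec_nonneg v

lemma dotProduct_inv_mulVec_le_of_posSemidef_sub_smul_one {A : Matrix n n ℝ} {c : ℝ}
    (hc : 0 < c) (hA : (A - c • 1).PosSemidef) (v : n → ℝ) :
    v ⬝ᵥ A⁻¹ *ᵥ v ≤ (v ⬝ᵥ v) / c := by
  have hApd : A.PosDef := by
    simpa using PosDef.posSemidef_add hA (PosDef.one.smul hc)
  set y := A⁻¹ *ᵥ v
  have hAy : A *ᵥ y = v := by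
    rw [mulVec_mulVec, mul_nonsing_inv _ (isUnit_iff_ne_zero.2 hApd.det_pos.ne'), one_mulVec]
  have hcy : c * (y ⬝ᵥ y) ≤ v ⬝ᵥ y := by
    have h := hA.dotProduct_mulVec_nonneg y
    simp only [star_trivial, sub_mulVec, smul_mulVec, one_mulVec, dotProduct_sub,
      dotProduct_smul, smul_eq_mul, hAy, dotProduct_comm y v] at h
    linarith
  have hcs : (v ⬝ᵥ y) ^ 2 ≤ (v ⬝ᵥ v) * (y ⬝ᵥ y) := by
    simpa [dotProduct, sq] using Finset.sum_mul_sq_le_sq_mul_sq Finset.univ v y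
  have hq : 0 ≤ v ⬝ᵥ y := hApd.dotProduct_inv_mulVec_nonneg v
  have hvv : 0 ≤ v ⬝ᵥ v := by simpa using dotProduct_self_star_nonneg v
  have hkey : v ⬝ᵥ y * c * (v ⬝ᵥ y) ≤ v ⬝ᵥ v * (v ⬝ᵥ y) := by
    nlinarith [mul_le_mul_of_nonneg_left hcy hvv, mul_le_mul_of_nonneg_left hcs hc.le]
  rw [le_div_iff₀ hc]
  rcases hq.eq_or_lt with hq₀ | hq₀
  · simpa [← hq₀] using hvv
  · exact le_of_mul_le_mul_right hkey hq₀

lemma PosDef.dotProduct_inv_mulVec_le_two_mul_log_det_add {A : Matrix n n ℝ} (hA : A.PosDef)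
    {v : n → ℝ} (hv : v ⬝ᵥ A⁻¹ *ᵥ v ≤ 1) :
    v ⬝ᵥ A⁻¹ *ᵥ v ≤ 2 * (Real.log (A + vecMulVec v v).det - Real.log A.det) := by
  have hq := hA.dotProduct_inv_mulVec_nonneg v
  rw [det_add_vecMulVec (isUnit_iff_ne_zero.2 hA.det_pos.ne'),
    Real.log_mul hA.det_pos.ne' (by linarith), add_sub_cancel_left]
  exact Real.le_two_mul_log_one_add hq hv

theorem sum_dotProduct_inv_mulVec_le_two_mul_log_det_div {T : ℕ} (A : ℕ → Matrix n n ℝ)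
    (v : Fin T → n → ℝ) (hA : ∀ t ≤ T, (A t).PosDef)
    (hstep : ∀ i : Fin T, A (i + 1) = A i + vecMulVec (v i) (v i))
    (hv : ∀ i : Fin T, v i ⬝ᵥ (A i)⁻¹ *ᵥ v i ≤ 1) :
    ∑ i, v i ⬝ᵥ (A i)⁻¹ *ᵥ v i ≤ 2 * Real.log ((A T).det / (A 0).det) := by
  calc ∑ i, v i ⬝ᵥ (A i)⁻¹ *ᵥ v i
      ≤ ∑ i : Fin T, 2 * (Real.log (A (i + 1)).det - Real.log (A i).det) :=
        sum_le_sum fun i _ =>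
          hstep i ▸ (hA i i.is_lt.le).dotProduct_inv_mulVec_le_two_mul_log_det_add (hv i)
    _ = 2 * (Real.log (A T).det - Real.log (A 0).det) := by
        rw [← mul_sum, Fin.sum_univ_eq_sum_range (fun t => Real.log (A (t + 1)).det -
          Real.log (A t).det), sum_range_sub (fun t => Real.log (A t).det)]
    _ = 2 * Real.log ((A T).det / (A 0).det) := by
        rw [Real.log_div (hA T le_rfl).det_pos.ne' (hA 0 T.zero_le).det_pos.ne']

end Matrix

theorem elliptical_potential_no_clipping
    {d : ℕ} (T : ℕ) (L : ℝ) (x : Fin T → Fin d → ℝ)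
    (hx : ∀ i, Real.sqrt (x i ⬝ᵥ x i) ≤ L)
    (Lam0 : Matrix (Fin d) (Fin d) ℝ) (hLam0 : Lam0.PosDef)
    (hmin : (Lam0 - max 1 (L ^ 2) • (1 : Matrix (Fin d) (Fin d) ℝ)).PosSemidef)
    (Lam : ℕ → Matrix (Fin d) (Fin d) ℝ)
    (hLam : ∀ t, Lam t = Lam0 +
      ∑ i ∈ Finset.univ.filter (fun i : Fin T => (i : ℕ) < t), vecMulVec (x i) (x i)) :
    ∑ i : Fin T, x i ⬝ᵥ (Lam (i : ℕ))⁻¹.mulVec (x i)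
      ≤ 2 * Real.log ((Lam T).det / Lam0.det) := by
  set c := max 1 (L ^ 2)
  have hc : 0 < c := one_pos.trans_le (le_max_left _ _)
  have hgram (t : ℕ) : (Lam t - Lam0).PosSemidef := by
    rw [hLam t, add_sub_cancel_left]
    exact posSemidef_sum _ fun i _ => by simpa using posSemidef_vecMulVec_self_star (x i)
  have hpd (t : ℕ) : (Lam t).PosDef := by simpa using hLam0.add_posSemidef (hgram t)
  have hstep (i : Fin T) : Lam (i + 1) = Lam i + vecMulVec (x i) (x i) := by
    have hfilter : univ.filter (fun j : Fin T => (j : ℕ) < i + 1)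
        = insert i (univ.filter (fun j : Fin T => (j : ℕ) < i)) := by
      ext j
      simp [le_iff_lt_or_eq, Fin.ext_iff, or_comm]
    rw [hLam, hLam, hfilter, sum_insert (by simp), add_comm (vecMulVec (x i) (x i)), add_assoc]
  have hsmall (i : Fin T) : x i ⬝ᵥ (Lam i)⁻¹ *ᵥ x i ≤ 1 := by
    have hxx : x i ⬝ᵥ x i ≤ c := (Real.sqrt_le_iff.1 (hx i)).2.trans (le_max_right _ _)
    have hlow : (Lam i - c • 1).PosSemidef := by
      simpa using hmin.add (hgram i)
    exact (dotProduct_inv_mulVec_le_of_posSemidef_sub_smul_one hc hlow (x i)).trans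
      ((div_le_one hc).2 hxx)
  have h0 : Lam 0 = Lam0 := by simp [hLam]
  simpa [h0] using sum_dotProduct_inv_mulVec_le_two_mul_log_det_div Lam x (fun t _ => hpd t)
    hstep hsmall
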